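/- arXiv:1702.03277 — 2 statements merged into one kernel-verified Lean document; each statement's English description precedes it below -/
import Mathlib

section
/- Crossover property of paths (Theorem 3): for every input D ∈ Σ*, every position k ∈ {0,…,|D|} and every stage u ∈ {0,1,2,…}: given paths p, q ∈ 𝒫ₖ^u such that |p̄| = |q̄₀…q̄_{n-1}| ≤ k for some n ∈ {0,…,|q|}, and such that [p q_n … q_{|q|-1}] ∈ ℒ_prefix, it follows that the concatenated path p q_n … q_{|q|-1} ∈ 𝒫ₖ^u. -/
namespace LL
section Defs

/-- A context-free grammar `(𝔑, 𝔗, ℜ, 𝔖)`: nonterminals are the type `N`,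
terminals the type `T` (automatically disjoint), `rules ⊆ 𝔑 × (𝔑 ∪ 𝔗)*`,
and `start ∈ 𝔑`. -/
structure CFG (N T : Type*) where
  rules : Set (N × List (N ⊕ T))
  start : N

variable {N T C : Type*}

/-- One derivation step `α ⇒ β`. -/
def CFG.Step (G : CFG N T) (α β : List (N ⊕ T)) : Prop :=
  ∃ a A b γ, α = a ++ Sum.inl A :: b ∧ β = a ++ γ ++ b ∧ (A, γ) ∈ G.rules

/-- `⇒*`, the reflexive transitive closure of `⇒`. -/
def CFG.Derives (G : CFG N T) : List (N ⊕ T) → List (N ⊕ T) → Prop :=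
  Relation.ReflTransGen G.Step

/-- `ℒ = { w ∈ 𝔗* | 𝔖 ⇒* w }`. -/
def CFG.lang (G : CFG N T) : Set (List T) :=
  {w | G.Derives [Sum.inl G.start] (w.map Sum.inr)}

/-- `ℒ_prefix = { w ∈ 𝔗* | ∃ α. 𝔖 ⇒* w α }`. -/
def CFG.langPrefix (G : CFG N T) : Set (List T) :=
  {w | ∃ α, G.Derives [Sum.inl G.start] (w.map Sum.inr ++ α)}

/-- A token is a pair `(t, c) ∈ 𝔗 × Σ*`. -/
abbrev Token (T C : Type*) := T × List C

/-- `p̄`, the characters of a token sequence. -/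
def chars (p : List (Token T C)) : List C := (p.map Prod.snd).flatten

/-- `[p]`, the terminals of a token sequence. -/
def terms (p : List (Token T C)) : List T := p.map Prod.fst

/-- `limit f X = ⋃ n, fⁿ(X)`. -/
def limit {α : Type*} (f : Set α → Set α) (X : Set α) : Set α := ⋃ n, f^[n] X

/-- A local lexing `(Lex, Sel)` with respect to terminals `T` and characters `C`. -/
structure LocalLexing (T C : Type*) where
  Lex : T → List C → ℕ → Set (Token T C)
  Sel : Set (Token T C) → Set (Token T C) → Set (Token T C)
  lex_sound : ∀ t D k, ∀ x ∈ Lex t D k,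
      x.1 = t ∧ k + x.2.length ≤ D.length ∧ x.2 <+: D.drop k
  sel_sound : ∀ A B : Set (Token T C), A ⊆ B → A ⊆ Sel A B ∧ Sel A B ⊆ B

variable (G : CFG N T) (ll : LocalLexing T C) (D : List C)

/-- `𝒳ₖ = { x | x ∈ Lex([x])(D, k) }`. -/
def Xtok (k : ℕ) : Set (Token T C) := {x | x ∈ ll.Lex x.1 D k}

/-- `𝒲` of a path set `P` at position `k`:
`{ x ∈ 𝒳ₖ | ∃ p ∈ P. |p̄| = k ∧ [p x] ∈ ℒ_prefix }`. -/
def Wtok (P : Set (List (Token T C))) (k : ℕ) : Set (Token T C) :=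
  {x | x ∈ Xtok ll D k ∧ ∃ p ∈ P, (chars p).length = k ∧ terms (p ++ [x]) ∈ G.langPrefix}

/-- `Appendₖ T P = P ∪ { p t | p ∈ P ∧ |p̄| = k ∧ t ∈ T ∧ [p t] ∈ ℒ_prefix }`. -/
def Append (k : ℕ) (Ts : Set (Token T C)) (P : Set (List (Token T C))) :
    Set (List (Token T C)) :=
  P ∪ {q | ∃ p ∈ P, ∃ t ∈ Ts, q = p ++ [t] ∧ (chars p).length = k ∧ terms q ∈ G.langPrefix}

/-- The pair `(𝒫ₖᵘ, 𝒵ₖᵘ)`, starting from the path set `P₀` at position `k`: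
`𝒵ₖ⁰ = ∅`, `𝒵ₖᵘ⁺¹ = Sel(𝒵ₖᵘ, 𝒲ₖᵘ⁺¹)` and `𝒫ₖᵘ⁺¹ = limit (Appendₖ 𝒵ₖᵘ⁺¹) 𝒫ₖᵘ`. -/
def Pstage (k : ℕ) (P₀ : Set (List (Token T C))) :
    ℕ → Set (List (Token T C)) × Set (Token T C)
  | 0 => (P₀, ∅)
  | u + 1 =>
      let PZ := Pstage k P₀ u
      let Z := ll.Sel PZ.2 (Wtok G ll D PZ.1 k)
      (limit (Append G k Z) PZ.1, Z)

/-- `𝒫ₖ⁰`:  `𝒫₀⁰ = {ε}` and `𝒫ₖ₊₁⁰ = 𝒫ₖ^∞`. -/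
def Pinit : ℕ → Set (List (Token T C))
  | 0 => {[]}
  | k + 1 => ⋃ u, (Pstage G ll D k (Pinit k) u).1

/-- The path sets `𝒫ₖᵘ`. -/
def Pset (k u : ℕ) : Set (List (Token T C)) := (Pstage G ll D k (Pinit G ll D k) u).1

/-- The selected token sets `𝒵ₖᵘ`. -/
def Zset (k u : ℕ) : Set (Token T C) := (Pstage G ll D k (Pinit G ll D k) u).2

/-- The admissible token sets `𝒲ₖᵘ`. -/
def Wset (k u : ℕ) : Set (Token T C) := Wtok G ll D (Pset G ll D k u) k

/-- `𝒵ₖ^∞ = ⋃ u, 𝒵ₖᵘ`. -/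
def Zinf (k : ℕ) : Set (Token T C) := ⋃ u, Zset G ll D k u

/-- `𝕻 = 𝒫_{|D|}^∞`. -/
def PP : Set (List (Token T C)) := ⋃ u, Pset G ll D D.length u

/-- `ℓℓ(D) = { p ∈ 𝕻 | |p̄| = |D| ∧ [p] ∈ ℒ }`. -/
def sem : Set (List (Token T C)) :=
  {p | p ∈ PP G ll D ∧ (chars p).length = D.length ∧ terms p ∈ G.lang}

/-- An Earley item `(lhs → pre • post, origin, bin)`. -/
structure EItem (N T : Type*) where
  lhs : N
  pre : List (N ⊕ T)
  post : List (N ⊕ T)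
  origin : ℕ
  bin : ℕ

/-- `Init = { (𝔖 → • α, 0, 0) | (𝔖 → α) ∈ ℜ }`. -/
def EInit : Set (EItem N T) :=
  {x | ∃ α, (G.start, α) ∈ G.rules ∧ x = ⟨G.start, [], α, 0, 0⟩}

/-- The `Predict` operator. -/
def Predict (k : ℕ) (I : Set (EItem N T)) : Set (EItem N T) :=
  I ∪ {x | ∃ M γ, (M, γ) ∈ G.rules ∧
        (∃ N' α β i, (⟨N', α, Sum.inl M :: β, i, k⟩ : EItem N T) ∈ I) ∧
        x = ⟨M, [], γ, k, k⟩}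

/-- The `Complete` operator. -/
def Complete (k : ℕ) (I : Set (EItem N T)) : Set (EItem N T) :=
  I ∪ {x | ∃ N' α M β i j γ,
        (⟨N', α, Sum.inl M :: β, i, j⟩ : EItem N T) ∈ I ∧
        (⟨M, γ, [], j, k⟩ : EItem N T) ∈ I ∧
        x = ⟨N', α ++ [Sum.inl M], β, i, k⟩}

/-- The token-based `Scan` operator. -/
def Scan (Ts : Set (Token T C)) (k : ℕ) (I : Set (EItem N T)) : Set (EItem N T) :=
  I ∪ {x | ∃ N' α X c β i, (X, c) ∈ Ts ∧
        (⟨N', α, Sum.inr X :: β, i, k⟩ : EItem N T) ∈ I ∧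
        x = ⟨N', α ++ [Sum.inr X], β, i, k + c.length⟩}

/-- `Tokens T k I = Sel(T, { x | ∃ X N α β i. (N → α • X β, i, k) ∈ I ∧ x ∈ Lex(X)(D, k) })`. -/
def Tokens (Ts : Set (Token T C)) (k : ℕ) (I : Set (EItem N T)) : Set (Token T C) :=
  ll.Sel Ts {x | ∃ X N' α β i, (⟨N', α, Sum.inr X :: β, i, k⟩ : EItem N T) ∈ I ∧
        x ∈ ll.Lex X D k}

/-- `πₖ T I = limit (Scan T k ∘ Complete k ∘ Predict k) I`. -/
def pik (Ts : Set (Token T C)) (k : ℕ) (I : Set (EItem N T)) : Set (EItem N T) :=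
  limit (fun J => Scan Ts k (Complete k (Predict G k J))) I

/-- The pair `(𝔍ₖᵘ, 𝒯ₖᵘ)`, starting from the item set `J₀` at position `k`:
`𝒯ₖ⁰ = ∅`, `𝒯ₖᵘ⁺¹ = Tokens 𝒯ₖᵘ k 𝔍ₖᵘ` and `𝔍ₖᵘ⁺¹ = πₖ 𝒯ₖᵘ⁺¹ 𝔍ₖᵘ`. -/
def Jstage (k : ℕ) (J₀ : Set (EItem N T)) : ℕ → Set (EItem N T) × Set (Token T C)
  | 0 => (J₀, ∅)
  | u + 1 =>
      let JT := Jstage k J₀ u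
      let T' := Tokens ll D JT.2 k JT.1
      (pik G T' k JT.1, T')

/-- `𝔍ₖ⁰`:  `𝔍₀⁰ = π₀ ∅ Init` and `𝔍ₖ₊₁⁰ = πₖ₊₁ ∅ 𝓘ₖ`. -/
def Jinit : ℕ → Set (EItem N T)
  | 0 => pik G (∅ : Set (Token T C)) 0 (EInit G)
  | k + 1 => pik G (∅ : Set (Token T C)) (k + 1) (⋃ u, (Jstage G ll D k (Jinit k) u).1)

/-- The item sets `𝔍ₖᵘ`. -/
def Jset (k u : ℕ) : Set (EItem N T) := (Jstage G ll D k (Jinit G ll D k) u).1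

/-- The token sets `𝒯ₖᵘ`. -/
def Tset (k u : ℕ) : Set (Token T C) := (Jstage G ll D k (Jinit G ll D k) u).2

/-- `𝓘ₖ = ⋃ u, 𝔍ₖᵘ`. -/
def Ibin (k : ℕ) : Set (EItem N T) := ⋃ u, Jset G ll D k u

/-- `𝕴 = 𝓘_{|D|}`. -/
def Items : Set (EItem N T) := Ibin G ll D D.length

/-- An item `(N → α • β, i, j)` is `p`-valid. -/
def pValid (p : List (Token T C)) (x : EItem N T) : Prop :=
  (x.lhs, x.pre ++ x.post) ∈ G.rules ∧
  ∃ u ≤ p.length, ∃ γ,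
    (chars p).length = x.bin ∧
    (chars (p.take u)).length = x.origin ∧
    G.Derives [Sum.inl G.start] ((terms (p.take u)).map Sum.inr ++ Sum.inl x.lhs :: γ) ∧
    G.Derives x.pre ((terms (p.drop u)).map Sum.inr)

/-- `⟨P⟩ = { x | ∃ p ∈ P. x is p-valid }`. -/
def Gen (P : Set (List (Token T C))) : Set (EItem N T) :=
  {x | ∃ p ∈ P, pValid G p x}


/-! ### Auxiliary lemmas for the crossover theorem -/

@[simp] lemma chars_nil : chars ([] : List (Token T C)) = [] := rfl

@[simp] lemma chars_append (p q : List (Token T C)) :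
    chars (p ++ q) = chars p ++ chars q := by simp [chars]

@[simp] lemma terms_append (p q : List (Token T C)) :
    terms (p ++ q) = terms p ++ terms q := by simp [terms]

@[simp] lemma chars_singleton (x : Token T C) : chars [x] = x.2 := by simp [chars]

@[simp] lemma terms_singleton (x : Token T C) : terms [x] = [x.1] := by simp [terms]

lemma langPrefix_of_append {w v : List T} (h : w ++ v ∈ G.langPrefix) :
    w ∈ G.langPrefix := by
  obtain ⟨α, hα⟩ := h
  exact ⟨v.map Sum.inr ++ α, by simpa [List.map_append, List.append_assoc] using hα⟩

lemma subset_limit {α : Type*} (f : Set α → Set α) (X : Set α) : X ⊆ limit f X :=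
  fun x hx => Set.mem_iUnion.2 ⟨0, hx⟩

lemma concat_eq_concat {α : Type*} {l₁ l₂ : List α} {a b : α}
    (h : l₁ ++ [a] = l₂ ++ [b]) : l₁ = l₂ ∧ a = b := by
  have := List.append_inj' h rfl
  exact ⟨this.1, by simpa using this.2⟩

lemma pset_zero (k : ℕ) : Pset G ll D k 0 = Pinit G ll D k := rfl

lemma pset_succ (k u : ℕ) :
    Pset G ll D k (u + 1) =
      limit (Append G k (Zset G ll D k (u + 1))) (Pset G ll D k u) := rfl

lemma zset_zero (k : ℕ) : Zset G ll D k 0 = ∅ := rfl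

lemma zset_succ (k u : ℕ) :
    Zset G ll D k (u + 1) =
      ll.Sel (Zset G ll D k u) (Wtok G ll D (Pset G ll D k u) k) := rfl

lemma pinit_succ (k : ℕ) : Pinit G ll D (k + 1) = ⋃ u, Pset G ll D k u := rfl

lemma append_limit_subset {k : ℕ} {Z : Set (Token T C)} {P : Set (List (Token T C))} :
    Append G k Z (limit (Append G k Z) P) ⊆ limit (Append G k Z) P := by
  intro x hx
  rcases hx with hx | ⟨r, hr, t, ht, rfl, hrk, hterm⟩
  · exact hx
  · obtain ⟨b, hb⟩ := Set.mem_iUnion.1 hr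
    refine Set.mem_iUnion.2 ⟨b + 1, ?_⟩
    rw [Function.iterate_succ_apply']
    exact Or.inr ⟨r, hb, t, ht, rfl, hrk, hterm⟩

lemma pset_mono (k : ℕ) : Monotone (fun u => Pset G ll D k u) := by
  apply monotone_nat_of_le_succ
  intro u
  rw [pset_succ]
  exact subset_limit _ _

lemma wtok_mono {P P' : Set (List (Token T C))} (h : P ⊆ P') (k : ℕ) :
    Wtok G ll D P k ⊆ Wtok G ll D P' k := by
  rintro x ⟨hx, p, hp, hlen, hpre⟩
  exact ⟨hx, p, h hp, hlen, hpre⟩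

lemma zset_subset_wtok (k : ℕ) :
    ∀ u, Zset G ll D k u ⊆ Wtok G ll D (Pset G ll D k u) k := by
  intro u
  induction u with
  | zero => rw [zset_zero]; exact Set.empty_subset _
  | succ u ih =>
      rw [zset_succ]
      exact ((ll.sel_sound _ _ ih).2).trans
        (wtok_mono G ll D (pset_mono G ll D k (Nat.le_succ u)) k)

lemma zset_mono_succ (k u : ℕ) : Zset G ll D k u ⊆ Zset G ll D k (u + 1) := by
  rw [zset_succ]
  exact (ll.sel_sound _ _ (zset_subset_wtok G ll D k u)).1

/-- Every proper prefix (before a token) of a path in `P` has at most `k` characters. -/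
def Bnd (k : ℕ) (P : Set (List (Token T C))) : Prop :=
  ∀ q ∈ P, ∀ (a : List (Token T C)) (x : Token T C) (b : List (Token T C)),
    q = a ++ x :: b → (chars a).length ≤ k

/-- Tokens at the `k` boundary come from `Z` and keep the terminal word admissible. -/
def Inv (k : ℕ) (Z : Set (Token T C)) (P : Set (List (Token T C))) : Prop :=
  ∀ q ∈ P, ∀ (a : List (Token T C)) (x : Token T C) (b : List (Token T C)),
    q = a ++ x :: b → k ≤ (chars a).length →
    (chars a).length = k ∧ x ∈ Z ∧ terms (a ++ [x]) ∈ G.langPrefix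

/-- The crossover property of a path set. -/
def CO (k : ℕ) (P : Set (List (Token T C))) : Prop :=
  ∀ p ∈ P, ∀ q ∈ P, ∀ n ≤ q.length,
    (chars p).length = (chars (q.take n)).length → (chars p).length ≤ k →
    terms (p ++ q.drop n) ∈ G.langPrefix → p ++ q.drop n ∈ P

lemma bnd_limit {k : ℕ} {Z : Set (Token T C)} {P : Set (List (Token T C))}
    (h : Bnd k P) : Bnd k (limit (Append G k Z) P) := by
  have key : ∀ b, Bnd k ((Append G k Z)^[b] P) := by
    intro b
    induction b with
    | zero => exact h
    | succ b ih =>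
        intro q hq a x bb he
        rw [Function.iterate_succ_apply'] at hq
        rcases hq with hq | ⟨r, hr, t, ht, hqe, hrk, hterm⟩
        · exact ih q hq a x bb he
        · rcases List.eq_nil_or_concat bb with rfl | ⟨c, y, rfl⟩
          · obtain ⟨rfl, rfl⟩ := concat_eq_concat (he.symm.trans hqe)
            exact le_of_eq hrk
          · have h2 : a ++ x :: c = r ∧ y = t := by
              apply concat_eq_concat
              have h3 := he.symm.trans hqe
              simpa [List.append_assoc] using h3
            exact ih r hr a x c h2.1.symm
  intro q hq
  obtain ⟨b, hb⟩ := Set.mem_iUnion.1 hq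
  exact key b q hb

lemma bnd_pinit (k : ℕ) : Bnd k (Pinit G ll D k) := by
  induction k with
  | zero =>
      intro q hq a x bb he
      have hqq : q = [] := hq
      subst hqq
      exact absurd he (by simp)
  | succ k ih =>
      have hu : ∀ u, Bnd k (Pset G ll D k u) := by
        intro u
        induction u with
        | zero => exact ih
        | succ u ihu => rw [pset_succ]; exact bnd_limit G ihu
      intro q hq a x bb he
      rw [pinit_succ] at hq
      obtain ⟨u, hu'⟩ := Set.mem_iUnion.1 hq
      exact (hu u q hu' a x bb he).trans (Nat.le_succ k)

lemma bnd_pset (k u : ℕ) : Bnd k (Pset G ll D k u) := by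
  induction u with
  | zero => exact bnd_pinit G ll D k
  | succ u ih => rw [pset_succ]; exact bnd_limit G ih

lemma bnd_pinit_succ (k : ℕ) : Bnd k (Pinit G ll D (k + 1)) := by
  intro q hq a x bb he
  rw [pinit_succ] at hq
  obtain ⟨u, hu⟩ := Set.mem_iUnion.1 hq
  exact bnd_pset G ll D k u q hu a x bb he

lemma inv_limit {k : ℕ} {Z Z' : Set (Token T C)} {P : Set (List (Token T C))}
    (hZ : Z ⊆ Z') (h : Inv G k Z P) :
    Inv G k Z' (limit (Append G k Z') P) := by
  have key : ∀ b, ∀ q ∈ (Append G k Z')^[b] P,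
      ∀ (a : List (Token T C)) (x : Token T C) (bb : List (Token T C)),
      q = a ++ x :: bb → k ≤ (chars a).length →
      (chars a).length = k ∧ x ∈ Z' ∧ terms (a ++ [x]) ∈ G.langPrefix := by
    intro b
    induction b with
    | zero =>
        intro q hq a x bb he hk
        obtain ⟨h1, h2, h3⟩ := h q hq a x bb he hk
        exact ⟨h1, hZ h2, h3⟩
    | succ b ih =>
        intro q hq a x bb he hk
        rw [Function.iterate_succ_apply'] at hq
        rcases hq with hq | ⟨r, hr, t, ht, hqe, hrk, hterm⟩
        · exact ih q hq a x bb he hk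
        · rcases List.eq_nil_or_concat bb with rfl | ⟨c, y, rfl⟩
          · obtain ⟨rfl, rfl⟩ := concat_eq_concat (he.symm.trans hqe)
            exact ⟨hrk, ht, by rw [← he]; exact hterm⟩
          · have h2 : a ++ x :: c = r ∧ y = t := by
              apply concat_eq_concat
              have h3 := he.symm.trans hqe
              simpa [List.append_assoc] using h3
            exact ih r hr a x c h2.1.symm hk
  intro q hq a x bb he hk
  obtain ⟨b, hb⟩ := Set.mem_iUnion.1 hq
  exact key b q hb a x bb he hk

lemma inv_pinit (k : ℕ) (Z : Set (Token T C)) : Inv G k Z (Pinit G ll D k) := by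
  cases k with
  | zero =>
      intro q hq a x bb he hk
      have hqq : q = [] := hq
      subst hqq
      exact absurd he (by simp)
  | succ k =>
      intro q hq a x bb he hk
      have := bnd_pinit_succ G ll D k q hq a x bb he
      omega

lemma inv_pset (k u : ℕ) : Inv G k (Zset G ll D k u) (Pset G ll D k u) := by
  induction u with
  | zero => exact inv_pinit G ll D k _
  | succ u ih =>
      rw [pset_succ]
      exact inv_limit G (zset_mono_succ G ll D k u) ih

lemma mem_base_of_lt {k : ℕ} {Z : Set (Token T C)} {P : Set (List (Token T C))}
    {p : List (Token T C)} (hp : p ∈ limit (Append G k Z) P)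
    (h : (chars p).length < k) : p ∈ P := by
  have key : ∀ b, ∀ p ∈ (Append G k Z)^[b] P, (chars p).length < k → p ∈ P := by
    intro b
    induction b with
    | zero => exact fun p hp _ => hp
    | succ b ih =>
        intro p hp hlt
        rw [Function.iterate_succ_apply'] at hp
        rcases hp with hp | ⟨r, hr, t, ht, rfl, hrk, hterm⟩
        · exact ih p hp hlt
        · simp only [chars_append, List.length_append] at hlt
          omega
  obtain ⟨b, hb⟩ := Set.mem_iUnion.1 hp
  exact key b p hb h

lemma append_suffix {k : ℕ} {Z : Set (Token T C)} {P : Set (List (Token T C))}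
    (hInv : Inv G k Z P) {q : List (Token T C)} (hq : q ∈ P) :
    ∀ (s a p : List (Token T C)), q = a ++ s →
      p ∈ limit (Append G k Z) P → (chars p).length = k → (chars a).length = k →
      terms (p ++ s) ∈ G.langPrefix → p ++ s ∈ limit (Append G k Z) P := by
  intro s
  induction s with
  | nil =>
      intro a p _ hp _ _ _
      simpa using hp
  | cons x s ih =>
      intro a p hqa hp hpk hak hterm
      obtain ⟨_, hxZ, _⟩ := hInv q hq a x s hqa (le_of_eq hak.symm)
      have htermx : terms (p ++ [x]) ∈ G.langPrefix := by
        apply langPrefix_of_append G (v := terms s)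
        simpa [List.append_assoc, terms] using hterm
      have hpx : p ++ [x] ∈ limit (Append G k Z) P :=
        append_limit_subset G (Or.inr ⟨p, hp, x, hxZ, rfl, hpk, htermx⟩)
      cases s with
      | nil => simpa using hpx
      | cons y s' =>
          have hq2 : q = (a ++ [x]) ++ y :: s' := by simp [hqa]
          have hak2 : (chars (a ++ [x])).length = k :=
            (hInv q hq (a ++ [x]) y s' hq2 (by simp [hak])).1
          have hpk2 : (chars (p ++ [x])).length = k := by
            simp only [chars_append, List.length_append, chars_singleton] at hak2 ⊢
            omega
          have hres := ih (a ++ [x]) (p ++ [x]) hq2 hpx hpk2 hak2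
            (by simpa [List.append_assoc] using hterm)
          simpa [List.append_assoc] using hres

lemma co_step {k : ℕ} {Z : Set (Token T C)} {P : Set (List (Token T C))}
    (hCO : CO G k P) (hInv : Inv G k Z P) :
    ∀ b, ∀ q ∈ (Append G k Z)^[b] P, ∀ p ∈ limit (Append G k Z) P, ∀ n ≤ q.length,
      (chars p).length = (chars (q.take n)).length → (chars p).length ≤ k →
      terms (p ++ q.drop n) ∈ G.langPrefix →
      p ++ q.drop n ∈ limit (Append G k Z) P := by
  intro b
  induction b with
  | zero =>
      intro q hq p hp n hn hlen hlek hterm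
      rcases lt_or_eq_of_le hlek with hlt | heq
      · have hpP : p ∈ P := mem_base_of_lt G hp hlt
        exact subset_limit _ _ (hCO p hpP q hq n hn hlen hlek hterm)
      · exact append_suffix G hInv hq (q.drop n) (q.take n) p
          (q.take_append_drop n).symm hp heq (hlen ▸ heq) hterm
  | succ b ih =>
      intro q hq p hp n hn hlen hlek hterm
      rw [Function.iterate_succ_apply'] at hq
      rcases hq with hq | ⟨r, hr, t, ht, hqe, hrk, hqterm⟩
      · exact ih q hq p hp n hn hlen hlek hterm
      · subst hqe
        by_cases hnr : n ≤ r.length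
        · have htake : (r ++ [t]).take n = r.take n :=
            List.take_append_of_le_length hnr
          have hdrop : (r ++ [t]).drop n = r.drop n ++ [t] :=
            List.drop_append_of_le_length hnr
          rw [htake] at hlen
          rw [hdrop] at hterm ⊢
          have hterm' : terms (p ++ r.drop n) ∈ G.langPrefix := by
            apply langPrefix_of_append G (v := [t.1])
            simpa [List.append_assoc] using hterm
          have h1 : p ++ r.drop n ∈ limit (Append G k Z) P :=
            ih r hr p hp n hnr hlen hlek hterm'
          have hclen : (chars (p ++ r.drop n)).length = k := by
            have hsplit : (chars (r.take n)).length + (chars (r.drop n)).length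
                = (chars r).length := by
              rw [← List.length_append, ← chars_append, r.take_append_drop]
            simp only [chars_append, List.length_append]
            omega
          have hfin : (p ++ r.drop n) ++ [t] ∈ limit (Append G k Z) P := by
            apply append_limit_subset G
            refine Or.inr ⟨p ++ r.drop n, h1, t, ht, rfl, hclen, ?_⟩
            simpa [List.append_assoc] using hterm
          simpa [List.append_assoc] using hfin
        · have hn' : n = r.length + 1 := by
            simp only [List.length_append, List.length_cons, List.length_nil] at hn
            omega
          subst hn'
          have hdrop : (r ++ [t]).drop (r.length + 1) = [] := by
            apply List.drop_eq_nil_of_le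
            simp
          rw [hdrop]
          simpa using hp

lemma co_limit {k : ℕ} {Z : Set (Token T C)} {P : Set (List (Token T C))}
    (hCO : CO G k P) (hInv : Inv G k Z P) :
    CO G k (limit (Append G k Z) P) := by
  intro p hp q hq n hn hlen hlek hterm
  obtain ⟨b, hb⟩ := Set.mem_iUnion.1 hq
  exact co_step G hCO hInv b q hb p hp n hn hlen hlek hterm

lemma inv_mono_Z {k : ℕ} {Z Z' : Set (Token T C)} {P : Set (List (Token T C))}
    (hZ : Z ⊆ Z') (h : Inv G k Z P) : Inv G k Z' P := by
  intro q hq a x bb he hk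
  obtain ⟨h1, h2, h3⟩ := h q hq a x bb he hk
  exact ⟨h1, hZ h2, h3⟩

lemma co_pset_of_base {k : ℕ} (hbase : CO G k (Pinit G ll D k)) :
    ∀ u, CO G k (Pset G ll D k u) := by
  intro u
  induction u with
  | zero => exact hbase
  | succ u ih =>
      rw [pset_succ]
      exact co_limit G ih
        (inv_mono_Z G (zset_mono_succ G ll D k u) (inv_pset G ll D k u))

lemma co_pinit (k : ℕ) : CO G k (Pinit G ll D k) := by
  induction k with
  | zero =>
      intro p hp q hq n hn hlen hlek hterm
      have hpp : p = [] := hp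
      have hqq : q = [] := hq
      subst hpp; subst hqq
      simpa using hp
  | succ k ih =>
      have hco : ∀ u, CO G k (Pset G ll D k u) := co_pset_of_base G ll D ih
      intro p hp q hq n hn hlen hlek hterm
      rw [pinit_succ] at hp hq ⊢
      obtain ⟨u1, hp1⟩ := Set.mem_iUnion.1 hp
      obtain ⟨u2, hq2⟩ := Set.mem_iUnion.1 hq
      have hp' : p ∈ Pset G ll D k (max u1 u2) :=
        pset_mono G ll D k (le_max_left u1 u2) hp1
      have hq' : q ∈ Pset G ll D k (max u1 u2) :=
        pset_mono G ll D k (le_max_right u1 u2) hq2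
      by_cases hle : (chars p).length ≤ k
      · exact Set.mem_iUnion.2
          ⟨max u1 u2, hco (max u1 u2) p hp' q hq' n hn hlen hle hterm⟩
      · have hnq : n = q.length := by
          by_contra hne
          have hnlt : n < q.length := lt_of_le_of_ne hn hne
          have hsplit : q = q.take n ++ q[n] :: q.drop (n + 1) := by
            rw [← List.drop_eq_getElem_cons hnlt, List.take_append_drop]
          have := bnd_pset G ll D k (max u1 u2) q hq' (q.take n) q[n]
            (q.drop (n + 1)) hsplit
          omega
        subst hnq
        rw [List.drop_length]
        simpa using hp

/-- Crossover property of paths: if `p, q ∈ 𝒫ₖᵘ`, `|p̄| = |q̄₀…q̄ₙ₋₁| ≤ k` for some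
`n ≤ |q|`, and `[p qₙ … q_{|q|-1}] ∈ ℒ_prefix`, then `p qₙ … q_{|q|-1} ∈ 𝒫ₖᵘ`. -/
theorem crossover {N T C : Type*} (G : CFG N T) (ll : LocalLexing T C) (D : List C)
    (k : ℕ) (hk : k ≤ D.length) (u : ℕ)
    (p q : List (Token T C)) (hp : p ∈ Pset G ll D k u) (hq : q ∈ Pset G ll D k u)
    (n : ℕ) (hn : n ≤ q.length)
    (hlen : (chars p).length = (chars (q.take n)).length)
    (hlek : (chars p).length ≤ k)
    (hpre : terms (p ++ q.drop n) ∈ G.langPrefix) :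
    p ++ q.drop n ∈ Pset G ll D k u :=
  co_pset_of_base G ll D (co_pinit G ll D k) u p hp q hq n hn hlen hlek hpre

end Defs
end LL
end

section
/- Character-level local lexing recovers the grammar's language: let G = (𝔑, 𝔗, ℜ, 𝔖) be a context-free grammar, take Σ = 𝔗, and define the local lexing ℓℓ = (Lex, Sel) by Lex(t)(D, k) = {(t, t)} if k < |D| and D_k = t, and Lex(t)(D, k) = ∅ otherwise, with Sel(A, B) = B (the selector induced by the empty order). Then for every D ∈ 𝔗*, ℓℓ(D) ≠ ∅ if and only if D ∈ ℒ; i.e., ℒ_Σ = ℒ. -/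
namespace LL
section Defs

variable {N T C : Type*}

variable (G : CFG N T) (ll : LocalLexing T C) (D : List C)

/-! With character tokens, the only token lexed at position `k` is `(D_k, [D_k])`, so every
path that local lexing builds reads a prefix of `D` one character at a time: it is a
*canonical path*, determined by its length. Conversely, if `D ∈ ℒ` then every prefix of `D`
lies in `ℒ_prefix`, and since `Sel` discards nothing, the canonical path of length `k + 1`
is in `𝒫ₖ¹`, one `Appendₖ` step away from the canonical path of length `k` in `𝒫ₖ⁰`. -/

section CharLevel

theorem limit_subset {α : Type*} {f : Set α → Set α} {X S : Set α} (hX : X ⊆ S)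
    (hf : ∀ Y ⊆ S, f Y ⊆ S) : limit f X ⊆ S := by
  refine Set.iUnion_subset fun n => ?_
  induction n with
  | zero => exact hX
  | succ n ih => rw [Function.iterate_succ_apply']; exact hf _ ih

theorem apply_subset_limit {α : Type*} (f : Set α → Set α) (X : Set α) : f X ⊆ limit f X :=
  Set.subset_iUnion_of_subset 1 subset_rfl

def LocalLexing.IsCharLevel (ll : LocalLexing T T) : Prop :=
  ∀ (t : T) (E : List T) (k : ℕ), ll.Lex t E k = {x | E[k]? = some t ∧ x = (t, [t])}

def LocalLexing.SelectsAll (ll : LocalLexing T C) : Prop :=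
  ∀ A B : Set (Token T C), ll.Sel A B = B

theorem Pstage_succ_fst_of_selectsAll {G : CFG N T} {ll : LocalLexing T C} {D : List C}
    (hSel : ll.SelectsAll) (k : ℕ) (P₀ : Set (List (Token T C))) (u : ℕ) :
    (Pstage G ll D k P₀ (u + 1)).1 =
      limit (Append G k (Wtok G ll D (Pstage G ll D k P₀ u).1 k)) (Pstage G ll D k P₀ u).1 := by
  simp only [Pstage, hSel _ _]

theorem take_mem_langPrefix {G : CFG N T} {w : List T} (hw : w ∈ G.lang) (n : ℕ) :
    w.take n ∈ G.langPrefix :=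
  ⟨(w.drop n).map Sum.inr, by rwa [← List.map_append, List.take_append_drop]⟩

def canon (D : List T) (m : ℕ) : List (Token T T) := (D.take m).map fun t => (t, [t])

def canonPaths (D : List T) : Set (List (Token T T)) := {p | ∃ m ≤ D.length, p = canon D m}

variable {D : List T}

theorem chars_canon (m : ℕ) : chars (canon D m) = D.take m := by
  simp only [chars, canon, List.map_map]
  exact List.flatMap_singleton' _

theorem terms_canon (m : ℕ) : terms (canon D m) = D.take m := by
  simp [terms, canon, Function.comp_def]

theorem canon_succ {k : ℕ} (hk : k < D.length) :
    canon D (k + 1) = canon D k ++ [(D[k], [D[k]])] := by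
  simp only [canon, List.take_add_one, List.getElem?_eq_getElem hk, Option.toList_some,
    List.map_append, List.map_cons, List.map_nil]

theorem mem_Xtok_iff {ll : LocalLexing T T} (hLex : ll.IsCharLevel) {k : ℕ} {t : T}
    {c : List T} : (t, c) ∈ Xtok ll D k ↔ D[k]? = some t ∧ c = [t] := by
  simp [Xtok, hLex t D k]

variable {G : CFG N T} {ll : LocalLexing T T}

theorem Append_subset_canonPaths (hLex : ll.IsCharLevel) {k : ℕ} {Ts : Set (Token T T)}
    (hTs : Ts ⊆ Xtok ll D k) {P : Set (List (Token T T))} (hP : P ⊆ canonPaths D) :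
    Append G k Ts P ⊆ canonPaths D := by
  rintro q (hq | ⟨p, hp, ⟨t, c⟩, ht, rfl, hlen, -⟩)
  · exact hP hq
  obtain ⟨m, hm, rfl⟩ := hP hp
  obtain ⟨hget, rfl⟩ := (mem_Xtok_iff hLex).1 (hTs ht)
  obtain ⟨hk, hDk⟩ := List.getElem?_eq_some_iff.1 hget
  rw [chars_canon, List.length_take_of_le hm] at hlen
  subst hlen
  exact ⟨m + 1, hk, by rw [canon_succ hk, hDk]⟩

theorem Pstage_subset_canonPaths (hLex : ll.IsCharLevel) (hSel : ll.SelectsAll) {k : ℕ}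
    {P₀ : Set (List (Token T T))} (hP₀ : P₀ ⊆ canonPaths D) (u : ℕ) :
    (Pstage G ll D k P₀ u).1 ⊆ canonPaths D := by
  induction u with
  | zero => exact hP₀
  | succ u ih =>
    rw [Pstage_succ_fst_of_selectsAll hSel]
    exact limit_subset ih fun Y hY => Append_subset_canonPaths hLex (fun x hx => hx.1) hY

theorem Pinit_subset_canonPaths (hLex : ll.IsCharLevel) (hSel : ll.SelectsAll) (k : ℕ) :
    Pinit G ll D k ⊆ canonPaths D := by
  induction k with
  | zero => rintro p rfl; exact ⟨0, Nat.zero_le _, by simp [canon]⟩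
  | succ k ih => exact Set.iUnion_subset (Pstage_subset_canonPaths hLex hSel ih)

theorem PP_subset_canonPaths (hLex : ll.IsCharLevel) (hSel : ll.SelectsAll) :
    PP G ll D ⊆ canonPaths D :=
  Set.iUnion_subset (Pstage_subset_canonPaths hLex hSel (Pinit_subset_canonPaths hLex hSel _))

theorem canon_mem_Pinit (hLex : ll.IsCharLevel) (hSel : ll.SelectsAll) (hD : D ∈ G.lang) :
    ∀ k ≤ D.length, canon D k ∈ Pinit G ll D k
  | 0, _ => rfl
  | k + 1, hk => by
    have hmem : canon D k ∈ Pinit G ll D k := canon_mem_Pinit hLex hSel hD k (by omega)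
    have hlen : (chars (canon D k)).length = k := by
      rw [chars_canon, List.length_take_of_le (by omega)]
    have hprefix : terms (canon D k ++ [(D[k], [D[k]])]) ∈ G.langPrefix := by
      rw [← canon_succ hk, terms_canon]
      exact take_mem_langPrefix hD (k + 1)
    have hW : (D[k], [D[k]]) ∈ Wtok G ll D (Pinit G ll D k) k :=
      ⟨(mem_Xtok_iff hLex).2 ⟨List.getElem?_eq_getElem hk, rfl⟩, _, hmem, hlen, hprefix⟩
    refine Set.mem_iUnion.2 ⟨1, ?_⟩
    rw [Pstage_succ_fst_of_selectsAll hSel, canon_succ hk]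
    exact apply_subset_limit _ _ (Or.inr ⟨_, hmem, _, hW, rfl, hlen, hprefix⟩)

end CharLevel

/-- Character-level local lexing recovers the grammar's language: with `Σ = 𝔗`,
`Lex(t)(D, k) = {(t, t)}` if `k < |D| ∧ D_k = t` (and `∅` otherwise), and
`Sel(A, B) = B`, we have `ℓℓ(D) ≠ ∅` iff `D ∈ ℒ`. -/
theorem char_lexing_lang {N T : Type*} (G : CFG N T) (ll : LocalLexing T T)
    (hLex : ∀ (t : T) (E : List T) (k : ℕ),
      ll.Lex t E k = {x | E[k]? = some t ∧ x = (t, [t])})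
    (hSel : ∀ A B : Set (Token T T), ll.Sel A B = B)
    (D : List T) :
    sem G ll D ≠ ∅ ↔ D ∈ G.lang := by
  rw [← Set.nonempty_iff_ne_empty]
  constructor
  · rintro ⟨p, hp, hlen, hterms⟩
    obtain ⟨m, hm, rfl⟩ := PP_subset_canonPaths hLex hSel hp
    rw [chars_canon, List.length_take_of_le hm] at hlen
    rwa [terms_canon, hlen, List.take_length] at hterms
  · intro hD
    refine ⟨canon D D.length, ?_, ?_, ?_⟩
    · exact Set.mem_iUnion.2 ⟨0, canon_mem_Pinit hLex hSel hD _ le_rfl⟩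
    · rw [chars_canon, List.take_length]
    · rwa [terms_canon, List.take_length]

end Defs
end LL
end
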